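/- Let E be a finite-dimensional real inner product space, s > 0, μ ≥ 0 with μ·s < 1, f : E → ℝ differentiable, μ-strongly convex, with (1/s)-Lipschitz gradient, and x* a minimizer of f. Let (t_k)_{k≥0} be a strictly increasing sequence of positive reals satisfying (2√s/t_k)·cothc((√μ/2)·t_k) ≤ 1 for all k ≥ 2, and (1 − (2√s/t_{k+1})·cothc((√μ/2)·t_{k+1}))·(t_{k+1}²/4)·sinhc²((√μ/2)·t_{k+1}) ≤ (t_k²/4)·sinhc²((√μ/2)·t_k) for all k ≥ 0. Define x₀ = z₀ ∈ E and, for k ≥ 0, τ_k = ((2√s/t_{k+1})·cothc((√μ/2)·t_{k+1}) − μ·s)/(1 − μ·s), δ_k = (√s·t_{k+1}/2)·tanhc((√μ/2)·t_{k+1}), y_k = x_k + τ_k·(z_k − x_k), x_{k+1} = y_k − s·∇f(y_k), z_{k+1} = z_k + δ_k·(μ·y_k − μ·z_k − ∇f(y_k)). Then for all k ≥ 0, f(x_k) − f(x*) ≤ (4/t_k²)·cschc²((√μ/2)·t_k)·((1/2)·cosh²((√μ/2)·t₀)·‖x₀ − x*‖² + (t₀²/4)·sinhc²((√μ/2)·t₀)·(f(x₀)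 − f(x*))). -/

import Mathlib

/-!
With `A_k = (t_k²/4)·sinhc²((√μ/2)·t_k)`, so that `1 + μ·A_k = cosh²((√μ/2)·t_k)`, the energy
`V_k = A_k·(f(x_k) − f(x*)) + (1 + μ·A_k)/2·‖z_k − x*‖²` does not increase along the scheme.
One step combines the descent lemma at `y_k`, strong convexity at `y_k` towards `x*`, convexity at
`y_k` towards `x_k` and convexity of `‖·‖²`; the hyperbolic coefficients `θ = (2√s/t)·cothc` and
`δ = (√s·t/2)·tanhc` satisfy `θ·δ = s` and `θ·A_{k+1} = δ·(1 + μ·A_{k+1})`, which is exactly what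
makes the `‖∇f(y_k)‖²` terms and the remaining cross terms cancel. Then
`A_k·(f(x_k) − f(x*)) ≤ V_k ≤ V_0`.
-/

open scoped RealInnerProductSpace

noncomputable def sinhc (x : ℝ) : ℝ := if x = 0 then 1 else Real.sinh x / x
noncomputable def cschc (x : ℝ) : ℝ := 1 / sinhc x
noncomputable def tanhc (x : ℝ) : ℝ := sinhc x / Real.cosh x
noncomputable def cothc (x : ℝ) : ℝ := 1 / tanhc x

open Real

lemma sinhc_pos (x : ℝ) : 0 < sinhc x := by
  unfold sinhc
  split_ifs with hx
  · exact one_pos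
  · rcases lt_or_gt_of_ne hx with hneg | hpos
    · exact div_pos_of_neg_of_neg (sinh_neg_iff.mpr hneg) hneg
    · exact div_pos (sinh_pos_iff.mpr hpos) hpos

lemma sinh_eq_mul_sinhc (x : ℝ) : sinh x = x * sinhc x := by
  unfold sinhc
  split_ifs with hx
  · simp [hx]
  · field_simp

lemma cosh_sq_eq_one_add_sq_mul_sinhc_sq (x : ℝ) : cosh x ^ 2 = 1 + x ^ 2 * sinhc x ^ 2 := by
  rw [cosh_sq', sinh_eq_mul_sinhc]; ring

noncomputable def nagWeight (μ T : ℝ) : ℝ := T ^ 2 / 4 * sinhc (√μ / 2 * T) ^ 2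

noncomputable def nagCoupling (s μ T : ℝ) : ℝ := 2 * √s / T * cothc (√μ / 2 * T)

noncomputable def nagStepSize (s μ T : ℝ) : ℝ := √s * T / 2 * tanhc (√μ / 2 * T)

section Weights

variable {s μ T : ℝ}

lemma nagWeight_pos (hT : T ≠ 0) : 0 < nagWeight μ T := by
  have := sinhc_pos (√μ / 2 * T)
  unfold nagWeight
  positivity

lemma nagStepSize_pos (hs : 0 < s) (hT : 0 < T) : 0 < nagStepSize s μ T := by
  have := sinhc_pos (√μ / 2 * T)
  unfold nagStepSize tanhc
  positivity

lemma inv_nagWeight : (nagWeight μ T)⁻¹ = 4 / T ^ 2 * cschc (√μ / 2 * T) ^ 2 := by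
  unfold nagWeight cschc
  field_simp

lemma one_add_mul_nagWeight (hμ : 0 ≤ μ) : 1 + μ * nagWeight μ T = cosh (√μ / 2 * T) ^ 2 := by
  rw [cosh_sq_eq_one_add_sq_mul_sinhc_sq, mul_pow, div_pow, sq_sqrt hμ, nagWeight]
  ring

lemma nagCoupling_mul_nagStepSize (hs : 0 ≤ s) (hT : T ≠ 0) :
    nagCoupling s μ T * nagStepSize s μ T = s := by
  have := (sinhc_pos (√μ / 2 * T)).ne'
  have := (cosh_pos (√μ / 2 * T)).ne'
  unfold nagCoupling nagStepSize cothc tanhc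
  generalize √μ / 2 * T = u at *
  field_simp
  rw [sq_sqrt hs]

lemma nagCoupling_mul_nagWeight (hμ : 0 ≤ μ) (hT : T ≠ 0) :
    nagCoupling s μ T * nagWeight μ T = nagStepSize s μ T * (1 + μ * nagWeight μ T) := by
  have := (sinhc_pos (√μ / 2 * T)).ne'
  have := (cosh_pos (√μ / 2 * T)).ne'
  rw [one_add_mul_nagWeight hμ]
  unfold nagCoupling nagStepSize nagWeight cothc tanhc
  generalize √μ / 2 * T = u at *
  field_simp
  ring

end Weights

section Descent

variable {E : Type*} [NormedAddCommGroup E] [InnerProductSpace ℝ E] [CompleteSpace E]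
  {f : E → ℝ} {L : ℝ}

theorem le_add_inner_gradient_add_half_mul_sq (hf : Differentiable ℝ f)
    (hlip : ∀ x y, ‖gradient f x - gradient f y‖ ≤ L * ‖x - y‖) (x y : E) :
    f y ≤ f x + ⟪gradient f x, y - x⟫ + L / 2 * ‖y - x‖ ^ 2 := by
  set v := y - x
  set ψ : ℝ → ℝ := fun r ↦ f (x + r • v) - r * ⟪gradient f x, v⟫ - L / 2 * r ^ 2 * ‖v‖ ^ 2
  have hψ : ∀ r, HasDerivAt ψ
      (⟪gradient f (x + r • v) - gradient f x, v⟫ - L * r * ‖v‖ ^ 2) r := by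
    intro r
    have hline : HasDerivAt (fun r : ℝ ↦ x + r • v) v r :=
      ((hasDerivAt_id r).smul_const v).const_add x |>.congr_deriv (one_smul ℝ v)
    have hcomp := (hf _).hasGradientAt.hasFDerivAt.comp_hasDerivAt r hline
    refine ((hcomp.sub ((hasDerivAt_id r).mul_const ⟪gradient f x, v⟫)).sub
      (((hasDerivAt_pow 2 r).const_mul (L / 2)).mul_const (‖v‖ ^ 2))).congr_deriv ?_
    simp only [InnerProductSpace.toDual_apply_apply, inner_sub_left]
    ring
  have hanti : AntitoneOn ψ (Set.Icc 0 1) := by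
    refine antitoneOn_of_hasDerivWithinAt_nonpos (convex_Icc 0 1)
      (fun r _ ↦ (hψ r).continuousAt.continuousWithinAt) (fun r _ ↦ (hψ r).hasDerivWithinAt) ?_
    intro r hr
    rw [interior_Icc] at hr
    calc ⟪gradient f (x + r • v) - gradient f x, v⟫ - L * r * ‖v‖ ^ 2
        ≤ L * ‖x + r • v - x‖ * ‖v‖ - L * r * ‖v‖ ^ 2 := by
          gcongr
          exact (real_inner_le_norm _ _).trans
            (mul_le_mul_of_nonneg_right (hlip _ _) (norm_nonneg v))
      _ = 0 := by
          rw [add_sub_cancel_left, norm_smul, Real.norm_of_nonneg hr.1.le]; ring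
  have h := hanti (Set.left_mem_Icc.mpr zero_le_one) (Set.right_mem_Icc.mpr zero_le_one)
    zero_le_one
  simp only [ψ, one_smul, zero_smul, add_zero, v, add_sub_cancel] at h
  linarith

theorem apply_sub_smul_gradient_le {s : ℝ} (hf : Differentiable ℝ f)
    (hlip : ∀ x y, ‖gradient f x - gradient f y‖ ≤ 1 / s * ‖x - y‖) (hs : 0 < s) (x : E) :
    f (x - s • gradient f x) ≤ f x - s / 2 * ‖gradient f x‖ ^ 2 := by
  have h := le_add_inner_gradient_add_half_mul_sq hf hlip x (x - s • gradient f x)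
  rw [sub_sub_cancel_left, inner_neg_right, real_inner_smul_right, real_inner_self_eq_norm_sq,
    norm_neg, norm_smul, Real.norm_of_nonneg hs.le] at h
  field_simp at h ⊢
  linarith

end Descent

section Lyapunov

variable {E : Type*} [NormedAddCommGroup E] [InnerProductSpace ℝ E] [CompleteSpace E]
  {f : E → ℝ}

theorem nag_lyapunov_step {μ s θ δ τ A A' : ℝ} {x z y x' z' xstar : E}
    (hf : Differentiable ℝ f)
    (hsc : ∀ x y : E, f x + ⟪gradient f x, y - x⟫ + μ / 2 * ‖y - x‖ ^ 2 ≤ f y)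
    (hlip : ∀ x y : E, ‖gradient f x - gradient f y‖ ≤ 1 / s * ‖x - y‖)
    (hμ : 0 ≤ μ) (hμs : μ * s < 1) (hδ : 0 < δ) (hA' : 0 < A')
    (hθδ : θ * δ = s) (hθA' : θ * A' = δ * (1 + μ * A')) (hτ : τ * (1 - μ * s) = θ - μ * s)
    (hA : (1 - θ) * A' ≤ A) (hfx : f xstar ≤ f x) (hθ : θ ≤ 1 ∨ z = x)
    (hy : y = x + τ • (z - x)) (hx' : x' = y - s • gradient f y)
    (hz' : z' = z + δ • (μ • y - μ • z - gradient f y)) :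
    A' * (f x' - f xstar) + (1 + μ * A') / 2 * ‖z' - xstar‖ ^ 2
      ≤ A * (f x - f xstar) + (1 + μ * A) / 2 * ‖z - xstar‖ ^ 2 := by
  subst hθδ
  set g := gradient f y
  have hθA'_pos : 0 < θ * A' := by rw [hθA']; positivity
  have hθ_pos : 0 < θ := pos_of_mul_pos_left hθA'_pos hA'.le
  -- `μδ ≤ θ` because `θA' = δ + μδA'`, hence `(μδ)² ≤ μθδ = μs < 1`.
  have hμδ_le : μ * δ ≤ 1 := by
    have : μ * δ ≤ θ := by nlinarith
    nlinarith
  obtain ⟨w, hw_def⟩ : ∃ w, w = z + (μ * δ) • (y - z) := ⟨_, rfl⟩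
  have hz'_sq : ‖z' - xstar‖ ^ 2
      = ‖w - xstar‖ ^ 2 - 2 * δ * ⟪g, w - xstar⟫ + δ ^ 2 * ‖g‖ ^ 2 := by
    rw [show z' - xstar = (w - xstar) - δ • g by rw [hz', hw_def]; module, norm_sub_sq_real,
      real_inner_smul_right, norm_smul, Real.norm_of_nonneg hδ.le, real_inner_comm]
    ring
  have hw : w - xstar = (1 - μ * δ) • (z - xstar) + (μ * δ) • (y - xstar) := by
    rw [hw_def]; module
  have hyx : ⟪g, y - x⟫ = τ * ⟪g, z - x⟫ := by
    rw [hy, add_sub_cancel_left, real_inner_smul_right]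
  have hwy : ⟪g, w - xstar⟫ = ⟪g, y - xstar⟫ + (1 - μ * δ) * (1 - τ) * ⟪g, z - x⟫ := by
    rw [show w - xstar = (y - xstar) + ((1 - μ * δ) * (1 - τ)) • (z - x) by rw [hw_def, hy]; module,
      inner_add_right, real_inner_smul_right]
  have h_desc : f x' ≤ f y - θ * δ / 2 * ‖g‖ ^ 2 :=
    hx' ▸ apply_sub_smul_gradient_le hf hlip (by positivity) y
  have h_star : f y - f xstar - ⟪g, y - xstar⟫ ≤ -(μ / 2 * ‖y - xstar‖ ^ 2) := by
    have := hsc y xstar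
    rw [← neg_sub y xstar, inner_neg_right, norm_neg] at this
    linarith
  have h_conv : (1 - θ) * A' * (f y - f x - ⟪g, y - x⟫) ≤ 0 := by
    rcases hθ with hθ1 | rfl
    · have := hsc y x
      rw [← neg_sub y x, inner_neg_right, norm_neg] at this
      exact mul_nonpos_of_nonneg_of_nonpos (by nlinarith) (by nlinarith)
    · simp [hy]
  have h_sq : ‖w - xstar‖ ^ 2 ≤ (1 - μ * δ) * ‖z - xstar‖ ^ 2 + μ * δ * ‖y - xstar‖ ^ 2 := by
    rw [hw]
    exact ((convexOn_norm convex_univ).pow (fun _ _ ↦ norm_nonneg _) 2).2 trivial trivial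
      (by linarith) (by positivity) (by ring)
  calc A' * (f x' - f xstar) + (1 + μ * A') / 2 * ‖z' - xstar‖ ^ 2
      ≤ A' * (f y - θ * δ / 2 * ‖g‖ ^ 2 - f xstar)
        + (1 + μ * A') / 2 * (‖w - xstar‖ ^ 2 - 2 * δ * ⟪g, w - xstar⟫ + δ ^ 2 * ‖g‖ ^ 2) := by
        rw [hz'_sq]
        gcongr
    _ = θ * A' * (f y - f xstar - ⟪g, y - xstar⟫) + (1 - θ) * A' * (f y - f x - ⟪g, y - x⟫)
        + (1 - θ) * A' * (f x - f xstar) + (1 + μ * A') / 2 * ‖w - xstar‖ ^ 2 := by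
        -- `θδ = s` and `θA' = δ(1 + μA')` cancel the `‖g‖²` terms, `hτ` the `⟪g, z - x⟫` terms.
        rw [hwy, hyx]
        linear_combination (-(δ * ‖g‖ ^ 2 / 2) + ⟪g, y - xstar⟫
          + (1 - μ * δ) * (1 - τ) * ⟪g, z - x⟫) * hθA' + A' * ⟪g, z - x⟫ * hτ
    _ ≤ θ * A' * -(μ / 2 * ‖y - xstar‖ ^ 2) + 0 + (1 - θ) * A' * (f x - f xstar)
        + (1 + μ * A') / 2 * ((1 - μ * δ) * ‖z - xstar‖ ^ 2 + μ * δ * ‖y - xstar‖ ^ 2) := by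
        gcongr
    _ = (1 - θ) * A' * (f x - f xstar) + (1 + μ * ((1 - θ) * A')) / 2 * ‖z - xstar‖ ^ 2 := by
        linear_combination (μ * (‖z - xstar‖ ^ 2 - ‖y - xstar‖ ^ 2) / 2) * hθA'
    _ ≤ A * (f x - f xstar) + (1 + μ * A) / 2 * ‖z - xstar‖ ^ 2 := by
        gcongr

end Lyapunov

theorem unified_nag_family_convergence_general
    {E : Type*} [NormedAddCommGroup E] [InnerProductSpace ℝ E] [FiniteDimensional ℝ E]
    (s μ : ℝ) (hs : 0 < s) (hμ : 0 ≤ μ) (hμs : μ * s < 1)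
    (f : E → ℝ) (hf : Differentiable ℝ f)
    (hsc : ∀ x y : E, f x + ⟪gradient f x, y - x⟫ + μ / 2 * ‖y - x‖ ^ 2 ≤ f y)
    (hlip : ∀ x y : E, ‖gradient f x - gradient f y‖ ≤ (1 / s) * ‖x - y‖)
    (xstar : E) (hmin : ∀ x, f xstar ≤ f x)
    (t : ℕ → ℝ) (htpos : ∀ k, 0 < t k)
    (hcond1 : ∀ k ≥ 2, 2 * Real.sqrt s / t k * cothc (Real.sqrt μ / 2 * t k) ≤ 1)
    (hcond2 : ∀ k, (1 - 2 * Real.sqrt s / t (k + 1) * cothc (Real.sqrt μ / 2 * t (k + 1))) *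
        (t (k + 1) ^ 2 / 4 * sinhc (Real.sqrt μ / 2 * t (k + 1)) ^ 2)
      ≤ t k ^ 2 / 4 * sinhc (Real.sqrt μ / 2 * t k) ^ 2)
    (x y z : ℕ → E) (hinit : x 0 = z 0)
    (hy : ∀ k, y k = x k +
      ((2 * Real.sqrt s / t (k + 1) * cothc (Real.sqrt μ / 2 * t (k + 1)) - μ * s) /
        (1 - μ * s)) • (z k - x k))
    (hx : ∀ k, x (k + 1) = y k - s • gradient f (y k))
    (hz : ∀ k, z (k + 1) = z k +
      (Real.sqrt s * t (k + 1) / 2 * tanhc (Real.sqrt μ / 2 * t (k + 1))) •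
        (μ • y k - μ • z k - gradient f (y k))) :
    ∀ k, f (x k) - f xstar ≤
      4 / t k ^ 2 * cschc (Real.sqrt μ / 2 * t k) ^ 2 *
        (1 / 2 * Real.cosh (Real.sqrt μ / 2 * t 0) ^ 2 * ‖x 0 - xstar‖ ^ 2
          + t 0 ^ 2 / 4 * sinhc (Real.sqrt μ / 2 * t 0) ^ 2 * (f (x 0) - f xstar)) := by
  set V : ℕ → ℝ := fun k ↦ nagWeight μ (t k) * (f (x k) - f xstar)
    + (1 + μ * nagWeight μ (t k)) / 2 * ‖z k - xstar‖ ^ 2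
  have hV : Antitone V := by
    refine antitone_nat_of_succ_le fun k ↦ ?_
    have hT := htpos (k + 1)
    have hθ : nagCoupling s μ (t (k + 1)) ≤ 1 ∨ z k = x k := by
      cases k with
      | zero => exact .inr hinit.symm
      | succ n => exact .inl (hcond1 (n + 2) le_add_self)
    exact nag_lyapunov_step hf hsc hlip hμ hμs (nagStepSize_pos hs hT)
      (nagWeight_pos hT.ne') (nagCoupling_mul_nagStepSize hs.le hT.ne')
      (nagCoupling_mul_nagWeight hμ hT.ne') (div_mul_cancel₀ _ (by linarith)) (hcond2 k)
      (hmin (x k)) hθ (hy k) (hx k) (hz k)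
  intro k
  have hVk : nagWeight μ (t k) * (f (x k) - f xstar) ≤ V 0 :=
    (le_add_of_nonneg_right (by rw [one_add_mul_nagWeight hμ]; positivity)).trans
      (hV (Nat.zero_le k))
  have hV0 : V 0 = 1 / 2 * cosh (√μ / 2 * t 0) ^ 2 * ‖x 0 - xstar‖ ^ 2
      + t 0 ^ 2 / 4 * sinhc (√μ / 2 * t 0) ^ 2 * (f (x 0) - f xstar) := by
    simp only [V]
    rw [one_add_mul_nagWeight hμ, hinit, nagWeight]
    ring
  rw [← inv_nagWeight, ← hV0, inv_mul_eq_div, le_div_iff₀ (nagWeight_pos (htpos k).ne')]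
  linarith

/-- Convergence rate of the unified NAG family: for all `k ≥ 0`,
`f(x_k) − f(x*) ≤ (4/t_k²)·cschc²((√μ/2)t_k)·((1/2)cosh²((√μ/2)t₀)‖x₀ − x*‖²
+ (t₀²/4)sinhc²((√μ/2)t₀)(f(x₀) − f(x*)))`. -/
theorem unified_nag_family_convergence
    {E : Type*} [NormedAddCommGroup E] [InnerProductSpace ℝ E] [FiniteDimensional ℝ E]
    (s μ : ℝ) (hs : 0 < s) (hμ : 0 ≤ μ) (hμs : μ * s < 1)
    (f : E → ℝ) (hf : Differentiable ℝ f)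
    (hsc : ∀ x y : E, f x + ⟪gradient f x, y - x⟫ + μ / 2 * ‖y - x‖ ^ 2 ≤ f y)
    (hlip : ∀ x y : E, ‖gradient f x - gradient f y‖ ≤ (1 / s) * ‖x - y‖)
    (xstar : E) (hmin : ∀ x, f xstar ≤ f x)
    (t : ℕ → ℝ) (ht : StrictMono t) (htpos : ∀ k, 0 < t k)
    (hcond1 : ∀ k ≥ 2, 2 * Real.sqrt s / t k * cothc (Real.sqrt μ / 2 * t k) ≤ 1)
    (hcond2 : ∀ k, (1 - 2 * Real.sqrt s / t (k + 1) * cothc (Real.sqrt μ / 2 * t (k + 1))) *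
        (t (k + 1) ^ 2 / 4 * sinhc (Real.sqrt μ / 2 * t (k + 1)) ^ 2)
      ≤ t k ^ 2 / 4 * sinhc (Real.sqrt μ / 2 * t k) ^ 2)
    (x y z : ℕ → E) (hinit : x 0 = z 0)
    (hy : ∀ k, y k = x k +
      ((2 * Real.sqrt s / t (k + 1) * cothc (Real.sqrt μ / 2 * t (k + 1)) - μ * s) /
        (1 - μ * s)) • (z k - x k))
    (hx : ∀ k, x (k + 1) = y k - s • gradient f (y k))
    (hz : ∀ k, z (k + 1) = z k +
      (Real.sqrt s * t (k + 1) / 2 * tanhc (Real.sqrt μ / 2 * t (k + 1))) •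
        (μ • y k - μ • z k - gradient f (y k))) :
    ∀ k, f (x k) - f xstar ≤
      4 / t k ^ 2 * cschc (Real.sqrt μ / 2 * t k) ^ 2 *
        (1 / 2 * Real.cosh (Real.sqrt μ / 2 * t 0) ^ 2 * ‖x 0 - xstar‖ ^ 2
          + t 0 ^ 2 / 4 * sinhc (Real.sqrt μ / 2 * t 0) ^ 2 * (f (x 0) - f xstar)) :=
  unified_nag_family_convergence_general s μ hs hμ hμs f hf hsc hlip xstar hmin t htpos hcond1
    hcond2 x y z hinit hy hx hz
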